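/- arXiv:2101.11765 — 3 statements merged into one kernel-verified Lean document; each statement's English description precedes it below -/
import Mathlib

section
/- There exists a constant C_p > 0 such that for every u ∈ H̃ (i.e. every measurable u : D → ℝ with u ∈ L²(D), [u] < ∞, and u = 0 almost everywhere on Ω_I), one has ‖u‖_{L²(D)} ≤ C_p [u]. In other words, the energy seminorm [·] satisfies a Poincaré inequality on H̃ and hence defines a norm there. -/
open MeasureTheory ENNReal Set

noncomputable section

/-- Points of `ℝⁿ`. -/
abbrev Pt (n : ℕ) := EuclideanSpace ℝ (Fin n)

/-- The interaction domain `Ω_I`: points outside `Ω` that interact with points of `Ω`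
(within distance `δ ∈ (0,∞]`). -/
def interactionDomain {n : ℕ} (Ω : Set (Pt n)) (δ : ℝ≥0∞) : Set (Pt n) :=
  {y | y ∉ Ω ∧ ∃ x ∈ Ω, ENNReal.ofReal (dist x y) ≤ δ}

/-- The variable-order fractional kernel
`γ(x,y) = φ(x,y) |x-y|^(-n-2 s(x,y)) 1_{|x-y| ≤ δ}`. -/
def ker {n : ℕ} (s φ : Pt n → Pt n → ℝ) (δ : ℝ≥0∞) (x y : Pt n) : ℝ :=
  if ENNReal.ofReal (dist x y) ≤ δ then φ x y * dist x y ^ (-((n : ℝ) + 2 * s x y)) else 0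

/-- Symmetric part `γ_s` of the kernel. -/
def kerSym {n : ℕ} (s φ : Pt n → Pt n → ℝ) (δ : ℝ≥0∞) (x y : Pt n) : ℝ :=
  (ker s φ δ x y + ker s φ δ y x) / 2

/-- Antisymmetric part `γ_a` of the kernel. -/
def kerAnti {n : ℕ} (s φ : Pt n → Pt n → ℝ) (δ : ℝ≥0∞) (x y : Pt n) : ℝ :=
  (ker s φ δ x y - ker s φ δ y x) / 2

/-- The squared energy seminorm `[v]² = ∬_{D×D} (v(x)-v(y))² γ_s(x,y) dx dy`. -/
def energySq {n : ℕ} (s φ : Pt n → Pt n → ℝ) (δ : ℝ≥0∞) (D : Set (Pt n))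
    (v : Pt n → ℝ) : ℝ≥0∞ :=
  ∫⁻ x in D, ∫⁻ y in D, ENNReal.ofReal ((v x - v y) ^ 2 * kerSym s φ δ x y)

/-- The energy space `H̃`: measurable, square integrable on `D = Ω ∪ Ω_I`, finite energy,
and vanishing a.e. on `Ω_I`. -/
def tildeH {n : ℕ} (s φ : Pt n → Pt n → ℝ) (δ : ℝ≥0∞) (Ω ΩI : Set (Pt n)) :
    Set (Pt n → ℝ) :=
  {v | Measurable v ∧ MemLp v 2 (volume.restrict (Ω ∪ ΩI)) ∧
    energySq s φ δ (Ω ∪ ΩI) v < ⊤ ∧ v =ᵐ[volume.restrict ΩI] 0}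

/-- The bilinear form `A(u,v) = ∬_{D×D} γ(x,y) v(x) (u(x)-u(y)) dy dx`. -/
def biForm {n : ℕ} (s φ : Pt n → Pt n → ℝ) (δ : ℝ≥0∞) (D : Set (Pt n))
    (u v : Pt n → ℝ) : ℝ :=
  ∫ x in D, ∫ y in D, ker s φ δ x y * v x * (u x - u y)

/-- `β(r) = sup { |s(x,y) - s(y,x)| : x,y ∈ D, |x-y| ≤ r }`. -/
def betaFn {n : ℕ} (s : Pt n → Pt n → ℝ) (D : Set (Pt n)) (r : ℝ) : ℝ :=
  sSup {t | ∃ x ∈ D, ∃ y ∈ D, dist x y ≤ r ∧ t = |s x y - s y x|}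

/-! Extend `u` by zero outside `Ω` to `v` and fix `0 < r ≤ min δ 1`. On pairs at distance `< r`
the kernel is at least `φ̲`, so `[u]² ≥ φ̲ ∫_{|t|<r} G(t) dt` with `G(t) = ‖v - v(· + t)‖²_{L²}`.
`G` is quasi-subadditive, `G(a + b) ≤ 2 G(a) + 2 G(b)`, hence `G(N t) ≤ 4^N G(t)`; and once
`N |t|` exceeds the diameter of a ball containing `Ω`, the supports of `v` and `v(· + N t)` are
disjoint, so `G(N t) = 2 ‖v‖²`. Averaging over the annulus `r/2 < |t| < r` bounds `‖v‖²` by a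
multiple of `∫_{|t|<r} G`. -/

open Metric

lemma indicator_ae_eq_restrict_union {α : Type*} [MeasurableSpace α] {μ : Measure α}
    {s t : Set α} (hs : MeasurableSet s) {u : α → ℝ} (ht : u =ᵐ[μ.restrict t] 0) :
    s.indicator u =ᵐ[μ.restrict (s ∪ t)] u := by
  refine (ae_restrict_union_iff s t _).mpr ⟨indicator_ae_eq_restrict hs, ?_⟩
  filter_upwards [ht] with x hx
  simp [hx]

lemma eLpNorm_two_eq_rpow_lintegral_sq {α : Type*} [MeasurableSpace α] {μ : Measure α}
    (f : α → ℝ) : eLpNorm f 2 μ = (∫⁻ x, ENNReal.ofReal (f x ^ 2) ∂μ) ^ (1 / 2 : ℝ) := by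
  rw [eLpNorm_eq_lintegral_rpow_enorm_toReal two_ne_zero ENNReal.ofNat_ne_top]
  simp [Real.enorm_eq_ofReal_abs, ← ENNReal.ofReal_pow (abs_nonneg _)]

lemma ENNReal.exists_pos_le_one_ofReal_le {δ : ℝ≥0∞} (hδ : 0 < δ) :
    ∃ r : ℝ, 0 < r ∧ r ≤ 1 ∧ ENNReal.ofReal r ≤ δ := by
  obtain ⟨r, -, hr, hrδ⟩ := ENNReal.lt_iff_exists_real_btwn.mp (lt_min hδ one_pos)
  exact ⟨r, ENNReal.ofReal_pos.mp hr, by simpa using (hrδ.trans_le (min_le_right _ _)).le,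
    hrδ.le.trans (min_le_left _ _)⟩

lemma ENNReal.rpow_half_le_of_ofReal_mul_le {c : ℝ} (hc : 0 < c) {a b : ℝ≥0∞}
    (h : ENNReal.ofReal c * a ≤ b) :
    a ^ (1 / 2 : ℝ) ≤ ENNReal.ofReal (c ^ (-1 / 2 : ℝ)) * b ^ (1 / 2 : ℝ) := by
  have ha : a ≤ (ENNReal.ofReal c)⁻¹ * b := by
    rwa [mul_comm, ← div_eq_mul_inv, ENNReal.le_div_iff_mul_le (Or.inl (by simpa using hc))
      (Or.inl ENNReal.ofReal_ne_top), mul_comm]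
  calc a ^ (1 / 2 : ℝ) ≤ ((ENNReal.ofReal c)⁻¹ * b) ^ (1 / 2 : ℝ) := by gcongr
    _ = ENNReal.ofReal (c ^ (-1 / 2 : ℝ)) * b ^ (1 / 2 : ℝ) := by
      rw [ENNReal.mul_rpow_of_nonneg _ _ (by norm_num), ← ENNReal.ofReal_rpow_of_pos hc,
        ENNReal.inv_rpow, ← ENNReal.rpow_neg, neg_div]

section TranslationEnergy

variable {G : Type*} [MeasurableSpace G] [AddGroup G] {μ : Measure G}

def translationEnergy (μ : Measure G) (v : G → ℝ) (t : G) : ℝ≥0∞ :=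
  ∫⁻ x, ENNReal.ofReal ((v x - v (x + t)) ^ 2) ∂μ

@[simp]
lemma translationEnergy_zero (v : G → ℝ) : translationEnergy μ v 0 = 0 := by
  simp [translationEnergy]

lemma translationEnergy_add_le [MeasurableAdd G] [μ.IsAddRightInvariant] {v : G → ℝ}
    (hv : Measurable v) (a b : G) :
    translationEnergy μ v (a + b) ≤ 2 * translationEnergy μ v a + 2 * translationEnergy μ v b := by
  have hpoint : ∀ x, ENNReal.ofReal ((v x - v (x + (a + b))) ^ 2) ≤
      2 * ENNReal.ofReal ((v x - v (x + a)) ^ 2) +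
        2 * ENNReal.ofReal ((v (x + a) - v (x + a + b)) ^ 2) := by
    intro x
    rw [← add_assoc, ← ENNReal.ofReal_ofNat 2, ← ENNReal.ofReal_mul zero_le_two,
      ← ENNReal.ofReal_mul zero_le_two, ← ENNReal.ofReal_add (by positivity) (by positivity)]
    apply ENNReal.ofReal_le_ofReal
    nlinarith [sq_nonneg (v x - v (x + a) - (v (x + a) - v (x + a + b)))]
  have hmeas : Measurable fun x ↦ ENNReal.ofReal ((v x - v (x + a)) ^ 2) := by fun_prop
  calc translationEnergy μ v (a + b)
      ≤ ∫⁻ x, 2 * ENNReal.ofReal ((v x - v (x + a)) ^ 2) +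
          2 * ENNReal.ofReal ((v (x + a) - v (x + a + b)) ^ 2) ∂μ := lintegral_mono hpoint
    _ = 2 * translationEnergy μ v a + 2 * translationEnergy μ v b := by
      rw [lintegral_add_left (hmeas.const_mul 2), lintegral_const_mul' _ _ ENNReal.ofNat_ne_top,
        lintegral_const_mul' _ _ ENNReal.ofNat_ne_top,
        lintegral_add_right_eq_self (fun y ↦ ENNReal.ofReal ((v y - v (y + b)) ^ 2)) a]
      rfl

lemma translationEnergy_nsmul_le [MeasurableAdd G] [μ.IsAddRightInvariant] {v : G → ℝ}
    (hv : Measurable v) (t : G) (k : ℕ) :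
    translationEnergy μ v (k • t) ≤ 4 ^ k * translationEnergy μ v t := by
  induction k with
  | zero => simp
  | succ k ih =>
    have hle : translationEnergy μ v t ≤ 4 ^ k * translationEnergy μ v t :=
      le_mul_of_one_le_left zero_le (one_le_pow₀ (by norm_num))
    calc translationEnergy μ v ((k + 1) • t)
        ≤ 2 * translationEnergy μ v (k • t) + 2 * translationEnergy μ v t := by
          rw [succ_nsmul]; exact translationEnergy_add_le hv _ _
      _ ≤ 2 * (4 ^ k * translationEnergy μ v t) + 2 * (4 ^ k * translationEnergy μ v t) := by
          gcongr
      _ = 4 ^ (k + 1) * translationEnergy μ v t := by ring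

lemma translationEnergy_eq_of_forall_eq_zero_or [MeasurableAdd G] [μ.IsAddRightInvariant]
    {v : G → ℝ} (hv : Measurable v) {t : G} (ht : ∀ x, v x = 0 ∨ v (x + t) = 0) :
    translationEnergy μ v t = 2 * ∫⁻ x, ENNReal.ofReal (v x ^ 2) ∂μ := by
  have hpoint : ∀ x, ENNReal.ofReal ((v x - v (x + t)) ^ 2) =
      ENNReal.ofReal (v x ^ 2) + ENNReal.ofReal (v (x + t) ^ 2) := by
    intro x
    rw [← ENNReal.ofReal_add (sq_nonneg _) (sq_nonneg _)]
    rcases ht x with h | h <;> simp [h]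
  rw [translationEnergy, lintegral_congr hpoint, lintegral_add_left (by fun_prop),
    lintegral_add_right_eq_self (fun y ↦ ENNReal.ofReal (v y ^ 2)) t, two_mul]

end TranslationEnergy

section TruncatedEnergy

variable {E : Type*} [SeminormedAddCommGroup E] [MeasurableSpace E] {μ : Measure E}

def truncatedEnergy (μ : Measure E) (r : ℝ) (v : E → ℝ) : ℝ≥0∞ :=
  ∫⁻ x, ∫⁻ y, (ball x r).indicator (fun y ↦ ENNReal.ofReal ((v x - v y) ^ 2)) y ∂μ ∂μ

lemma truncatedEnergy_congr_ae {r : ℝ} {u v : E → ℝ} (h : u =ᵐ[μ] v) :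
    truncatedEnergy μ r u = truncatedEnergy μ r v := by
  refine lintegral_congr_ae ?_
  filter_upwards [h] with x hx
  refine lintegral_congr_ae ?_
  filter_upwards [h] with y hy
  by_cases hxy : y ∈ ball x r <;> simp [hxy, hx, hy]

lemma truncatedEnergy_eq_setLIntegral_translationEnergy [OpensMeasurableSpace E]
    [MeasurableAdd₂ E] [SFinite μ] [μ.IsAddLeftInvariant] {v : E → ℝ} (hv : Measurable v)
    (r : ℝ) : truncatedEnergy μ r v = ∫⁻ t in ball 0 r, translationEnergy μ v t ∂μ := by
  have hshift : ∀ x, ∫⁻ y, (ball x r).indicator (fun y ↦ ENNReal.ofReal ((v x - v y) ^ 2)) y ∂μ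
      = ∫⁻ t, (ball 0 r).indicator (fun t ↦ ENNReal.ofReal ((v x - v (x + t)) ^ 2)) t ∂μ := by
    intro x
    rw [← lintegral_add_left_eq_self _ x]
    congr 1 with t
    rw [← indicator_comp_right, preimage_add_ball, sub_self]
    rfl
  have hmeas : Measurable (Function.uncurry fun x t ↦
      (ball (0 : E) r).indicator (fun t ↦ ENNReal.ofReal ((v x - v (x + t)) ^ 2)) t) := by
    simp only [Function.uncurry_def]
    exact Measurable.ite (measurableSet_ball.preimage measurable_snd) (by fun_prop)
      measurable_const
  rw [truncatedEnergy, lintegral_congr hshift, lintegral_lintegral_swap hmeas.aemeasurable,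
    ← lintegral_indicator measurableSet_ball]
  congr 1 with t
  by_cases ht : t ∈ ball (0 : E) r <;> simp [ht, translationEnergy]

lemma truncatedEnergy_restrict_eq {Ω D : Set E} {r : ℝ} (hr : 0 < r)
    (hΩD : thickening r Ω ⊆ D) {v : E → ℝ} (hv : Function.support v ⊆ Ω) :
    truncatedEnergy (μ.restrict D) r v = truncatedEnergy μ r v := by
  have hmem : ∀ x y, (ball x r).indicator (fun y ↦ ENNReal.ofReal ((v x - v y) ^ 2)) y ≠ 0 →
      x ∈ D ∧ y ∈ D := by
    intro x y hxy
    have hy : y ∈ ball x r := by by_contra h; simp [h] at hxy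
    have hne : v x ≠ 0 ∨ v y ≠ 0 := by
      by_contra! h
      simp [h.1, h.2] at hxy
    rcases hne with hx | hy'
    · exact ⟨hΩD (self_subset_thickening hr Ω (hv hx)),
        hΩD (mem_thickening_iff.mpr ⟨x, hv hx, hy⟩)⟩
    · exact ⟨hΩD (mem_thickening_iff.mpr ⟨y, hv hy', by rwa [dist_comm]⟩),
        hΩD (self_subset_thickening hr Ω (hv hy'))⟩
  have hinner : ∀ x, ∫⁻ y in D, (ball x r).indicator
        (fun y ↦ ENNReal.ofReal ((v x - v y) ^ 2)) y ∂μ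
      = ∫⁻ y, (ball x r).indicator (fun y ↦ ENNReal.ofReal ((v x - v y) ^ 2)) y ∂μ :=
    fun x ↦ setLIntegral_eq_of_support_subset fun y hy ↦ (hmem x y hy).2
  rw [truncatedEnergy, lintegral_congr hinner]
  refine setLIntegral_eq_of_support_subset fun x hx ↦ ?_
  by_contra hxD
  refine hx (lintegral_eq_zero_of_ae_eq_zero (Filter.Eventually.of_forall fun y ↦ ?_))
  by_contra hy
  exact hxD (hmem x y hy).1

end TruncatedEnergy


lemma translationEnergy_eq_of_support_subset_ball {E : Type*} [SeminormedAddCommGroup E]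
    [MeasurableSpace E] [MeasurableAdd E] {μ : Measure E} [μ.IsAddRightInvariant] {v : E → ℝ}
    (hv : Measurable v) {R : ℝ} (hsupp : Function.support v ⊆ ball 0 R) {t : E}
    (ht : 2 * R ≤ ‖t‖) :
    translationEnergy μ v t = 2 * ∫⁻ x, ENNReal.ofReal (v x ^ 2) ∂μ := by
  refine translationEnergy_eq_of_forall_eq_zero_or hv fun x ↦ ?_
  by_contra! h
  have hx : ‖x‖ < R := mem_ball_zero_iff.mp (hsupp h.1)
  have hxt : ‖x + t‖ < R := mem_ball_zero_iff.mp (hsupp h.2)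
  have : ‖t‖ ≤ ‖x + t‖ + ‖x‖ := by simpa using norm_sub_le (x + t) x
  linarith

lemma exists_pos_mul_lintegral_sq_le_truncatedEnergy {E : Type*} [NormedAddCommGroup E]
    [NormedSpace ℝ E] [MeasurableSpace E] [BorelSpace E] [FiniteDimensional ℝ E] [Nontrivial E]
    {μ : Measure E} [μ.IsAddHaarMeasure] (R : ℝ) {r : ℝ} (hr : 0 < r) :
    ∃ c : ℝ, 0 < c ∧ ∀ v : E → ℝ, Measurable v → Function.support v ⊆ ball 0 R →
      ENNReal.ofReal c * ∫⁻ x, ENNReal.ofReal (v x ^ 2) ∂μ ≤ truncatedEnergy μ r v := by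
  obtain ⟨N, hN⟩ := exists_nat_ge (4 * R / r)
  set A : Set E := ball 0 r \ closedBall 0 (r / 2)
  have hA_pos : μ A ≠ 0 := by
    obtain ⟨t, ht⟩ := exists_norm_eq E (by positivity : 0 ≤ 3 * r / 4)
    refine ((isOpen_ball.sdiff isClosed_closedBall).measure_pos μ ⟨t, ?_, ?_⟩).ne'
    · rw [mem_ball_zero_iff, ht]; linarith
    · rw [mem_closedBall_zero_iff, ht]; linarith
  have hA_top : μ A ≠ ⊤ := (measure_mono sdiff_subset).trans_lt measure_ball_lt_top |>.ne
  have h4N : (4 : ℝ≥0∞) ^ N ≠ 0 := pow_ne_zero _ (by norm_num)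
  have hc : 2 * μ A / 4 ^ N ≠ ⊤ :=
    ENNReal.div_ne_top (ENNReal.mul_ne_top ENNReal.ofNat_ne_top hA_top) h4N
  refine ⟨(2 * μ A / 4 ^ N).toReal, ENNReal.toReal_pos ?_ hc, fun v hv hsupp ↦ ?_⟩
  · exact ENNReal.div_ne_zero.mpr
      ⟨mul_ne_zero two_ne_zero hA_pos, ENNReal.pow_ne_top (by norm_num)⟩
  set I := ∫⁻ x, ENNReal.ofReal (v x ^ 2) ∂μ
  have hA : ∀ t ∈ A, 2 * I ≤ 4 ^ N * translationEnergy μ v t := by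
    rintro t ⟨-, ht⟩
    rw [mem_closedBall_zero_iff, not_le] at ht
    have hNt : 2 * R ≤ ‖N • t‖ := by
      rw [RCLike.norm_nsmul ℝ, nsmul_eq_mul]
      have : 4 * R ≤ N * r := by rwa [div_le_iff₀ hr] at hN
      nlinarith [N.cast_nonneg (α := ℝ)]
    rw [← translationEnergy_eq_of_support_subset_ball hv hsupp hNt]
    exact translationEnergy_nsmul_le hv t N
  calc ENNReal.ofReal (2 * μ A / 4 ^ N).toReal * I
      = ∫⁻ _ in A, 2 * I / 4 ^ N ∂μ := by
        rw [ENNReal.ofReal_toReal hc, setLIntegral_const, ENNReal.div_eq_inv_mul,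
          ENNReal.div_eq_inv_mul]
        ring
    _ ≤ ∫⁻ t in A, translationEnergy μ v t ∂μ :=
        setLIntegral_mono' (isOpen_ball.sdiff isClosed_closedBall).measurableSet fun t ht ↦
          ENNReal.div_le_of_le_mul' (hA t ht)
    _ ≤ ∫⁻ t in ball 0 r, translationEnergy μ v t ∂μ := lintegral_mono_set sdiff_subset
    _ = truncatedEnergy μ r v := (truncatedEnergy_eq_setLIntegral_translationEnergy hv r).symm

section NonlocalModel
variable {n : ℕ}

lemma union_interactionDomain_eq (Ω : Set (Pt n)) (δ : ℝ≥0∞) :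
    Ω ∪ interactionDomain Ω δ = {y | ∃ x ∈ Ω, ENNReal.ofReal (dist x y) ≤ δ} := by
  ext y
  by_cases hyΩ : y ∈ Ω
  · simpa [hyΩ] using ⟨y, hyΩ, by simp⟩
  · simp [interactionDomain, hyΩ]

lemma IsOpen.union_interactionDomain {Ω : Set (Pt n)} (hΩ : IsOpen Ω) (δ : ℝ≥0∞) :
    IsOpen (Ω ∪ interactionDomain Ω δ) := by
  have : Ω ∪ interactionDomain Ω δ =
      ⋃ z ∈ {z : Pt n | ENNReal.ofReal ‖z‖ ≤ δ}, (· - z) ⁻¹' Ω := by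
    rw [union_interactionDomain_eq]
    ext y
    simp only [mem_ofPred_eq, mem_iUnion, mem_preimage, exists_prop]
    constructor
    · rintro ⟨x, hx, hxy⟩
      exact ⟨y - x, by rwa [← dist_eq_norm, dist_comm], by simpa using hx⟩
    · rintro ⟨z, hz, hyz⟩
      exact ⟨y - z, hyz, by simpa [dist_eq_norm] using hz⟩
  rw [this]
  exact isOpen_biUnion fun z _ ↦ hΩ.preimage (continuous_sub_right z)

lemma thickening_subset_union_interactionDomain (Ω : Set (Pt n)) {δ : ℝ≥0∞} {r : ℝ}
    (hr : ENNReal.ofReal r ≤ δ) : thickening r Ω ⊆ Ω ∪ interactionDomain Ω δ := by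
  rw [union_interactionDomain_eq]
  intro y hy
  obtain ⟨x, hx, hxy⟩ := mem_thickening_iff.mp hy
  exact ⟨x, hx, (ENNReal.ofReal_le_ofReal (by rw [dist_comm]; exact hxy.le)).trans hr⟩

lemma le_ker {s φ : Pt n → Pt n → ℝ} {δ : ℝ≥0∞} {x y : Pt n} (hxy : x ≠ y)
    (hd : dist x y ≤ 1) (hdδ : ENNReal.ofReal (dist x y) ≤ δ) (hs : 0 ≤ s x y)
    (hφ : 0 ≤ φ x y) : φ x y ≤ ker s φ δ x y := by
  rw [ker, if_pos hdδ]
  have hexp : -((n : ℝ) + 2 * s x y) ≤ 0 := by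
    have := n.cast_nonneg (α := ℝ)
    linarith
  exact le_mul_of_one_le_right hφ
    (Real.one_le_rpow_of_pos_of_le_one_of_nonpos (dist_pos.mpr hxy) hd hexp)

lemma le_kerSym {s φ : Pt n → Pt n → ℝ} {δ : ℝ≥0∞} {x y : Pt n} {c : ℝ} (hxy : x ≠ y)
    (hd : dist x y ≤ 1) (hdδ : ENNReal.ofReal (dist x y) ≤ δ) (hs : 0 ≤ s x y ∧ 0 ≤ s y x)
    (hc : 0 ≤ c) (hφ : c ≤ φ x y ∧ c ≤ φ y x) : c ≤ kerSym s φ δ x y := by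
  have h₁ : φ x y ≤ ker s φ δ x y := le_ker hxy hd hdδ hs.1 (hc.trans hφ.1)
  have h₂ : φ y x ≤ ker s φ δ y x :=
    le_ker hxy.symm (by rwa [dist_comm]) (by rwa [dist_comm]) hs.2 (hc.trans hφ.2)
  rw [kerSym]
  linarith [hφ.1, hφ.2]

lemma ofReal_mul_truncatedEnergy_le_energySq {s φ : Pt n → Pt n → ℝ} {δ : ℝ≥0∞}
    {D : Set (Pt n)} (hD : MeasurableSet D) {r c : ℝ}
    (hc : ∀ x ∈ D, ∀ y ∈ D, x ≠ y → dist x y < r → c ≤ kerSym s φ δ x y) (u : Pt n → ℝ) :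
    ENNReal.ofReal c * truncatedEnergy (volume.restrict D) r u ≤ energySq s φ δ D u := by
  rw [truncatedEnergy, energySq, ← lintegral_const_mul' _ _ ENNReal.ofReal_ne_top]
  refine setLIntegral_mono' hD fun x hx ↦ ?_
  rw [← lintegral_const_mul' _ _ ENNReal.ofReal_ne_top]
  refine setLIntegral_mono' hD fun y hy ↦ ?_
  by_cases hyx : y ∈ ball x r
  · rw [indicator_of_mem hyx, ← ENNReal.ofReal_mul' (sq_nonneg _)]
    rcases eq_or_ne x y with rfl | hxy
    · simp
    · refine ENNReal.ofReal_le_ofReal ?_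
      rw [mul_comm]
      have := hc x hx y hy hxy (by rw [dist_comm]; exact hyx)
      gcongr
  · simp [indicator_of_notMem hyx]

end NonlocalModel

theorem poincare_inequality_general
    (n : ℕ) (hn : 1 ≤ n)
    (Ω : Set (Pt n)) (hΩo : IsOpen Ω) (hΩb : Bornology.IsBounded Ω)
    (δ : ℝ≥0∞) (hδ : 0 < δ)
    (s φ : Pt n → Pt n → ℝ)
    (slo shi φlo φhi : ℝ) (hslo : 0 < slo) (hφlo : 0 < φlo)
    (D : Set (Pt n)) (hD : D = Ω ∪ interactionDomain Ω δ)
    (hs_bd : ∀ x ∈ D, ∀ y ∈ D, slo ≤ s x y ∧ s x y ≤ shi)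
    (hφ_bd : ∀ x ∈ D, ∀ y ∈ D, φlo ≤ φ x y ∧ φ x y ≤ φhi)
    :
    ∃ Cp : ℝ, 0 < Cp ∧
      ∀ u ∈ tildeH s φ δ Ω (interactionDomain Ω δ),
        eLpNorm u 2 (volume.restrict D) ≤
          ENNReal.ofReal Cp * (energySq s φ δ D u) ^ (1/2 : ℝ) := by
  obtain ⟨r, hr0, hr1, hrδ⟩ := ENNReal.exists_pos_le_one_ofReal_le hδ
  obtain ⟨R, hΩR⟩ := hΩb.subset_ball (0 : Pt n)
  have : NeZero n := ⟨by omega⟩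
  obtain ⟨c, hc, hpoinc⟩ :=
    exists_pos_mul_lintegral_sq_le_truncatedEnergy (μ := (volume : Measure (Pt n))) R hr0
  refine ⟨(φlo * c) ^ (-1 / 2 : ℝ), by positivity, fun u hu ↦ ?_⟩
  obtain ⟨hu_meas, -, -, hu_zero⟩ := hu
  have hDm : MeasurableSet D := (hD ▸ hΩo.union_interactionDomain δ).measurableSet
  have hΩD : thickening r Ω ⊆ D := hD ▸ thickening_subset_union_interactionDomain Ω hrδ
  set v := Ω.indicator u
  have hsupp : Function.support v ⊆ Ω := support_indicator_subset
  have huv : u =ᵐ[volume.restrict D] v :=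
    hD ▸ (indicator_ae_eq_restrict_union hΩo.measurableSet hu_zero).symm
  have hkernel : ∀ x ∈ D, ∀ y ∈ D, x ≠ y → dist x y < r → φlo ≤ kerSym s φ δ x y :=
    fun x hx y hy hxy hd ↦ le_kerSym hxy (hd.le.trans hr1)
      ((ENNReal.ofReal_le_ofReal hd.le).trans hrδ)
      ⟨hslo.le.trans (hs_bd x hx y hy).1, hslo.le.trans (hs_bd y hy x hx).1⟩ hφlo.le
      ⟨(hφ_bd x hx y hy).1, (hφ_bd y hy x hx).1⟩
  rw [eLpNorm_congr_ae huv, eLpNorm_restrict_eq_of_support_subset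
    (hsupp.trans ((self_subset_thickening hr0 Ω).trans hΩD)), eLpNorm_two_eq_rpow_lintegral_sq]
  refine ENNReal.rpow_half_le_of_ofReal_mul_le (by positivity) ?_
  calc ENNReal.ofReal (φlo * c) * ∫⁻ x, ENNReal.ofReal (v x ^ 2)
      = ENNReal.ofReal φlo * (ENNReal.ofReal c * ∫⁻ x, ENNReal.ofReal (v x ^ 2)) := by
        rw [ENNReal.ofReal_mul hφlo.le, mul_assoc]
    _ ≤ ENNReal.ofReal φlo * truncatedEnergy volume r v := by
        gcongr
        exact hpoinc v (hu_meas.indicator hΩo.measurableSet) (hsupp.trans hΩR)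
    _ = ENNReal.ofReal φlo * truncatedEnergy (volume.restrict D) r u := by
        rw [truncatedEnergy_congr_ae huv, truncatedEnergy_restrict_eq hr0 hΩD hsupp]
    _ ≤ energySq s φ δ D u := ofReal_mul_truncatedEnergy_le_energySq hDm hkernel u

/-- **Poincaré inequality** for the energy seminorm: there is `C_p > 0` with
`‖u‖_{L²(D)} ≤ C_p [u]` for every `u ∈ H̃`. -/
theorem poincare_inequality
    (n : ℕ) (hn : 1 ≤ n)
    (Ω : Set (Pt n)) (hΩo : IsOpen Ω) (hΩb : Bornology.IsBounded Ω) (hΩne : Ω.Nonempty)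
    (δ : ℝ≥0∞) (hδ : 0 < δ)
    (s φ : Pt n → Pt n → ℝ)
    (hs_meas : Measurable (Function.uncurry s)) (hφ_meas : Measurable (Function.uncurry φ))
    (slo shi φlo φhi : ℝ) (hslo : 0 < slo) (hshi : shi < 1) (hφlo : 0 < φlo)
    (D : Set (Pt n)) (hD : D = Ω ∪ interactionDomain Ω δ)
    (hs_bd : ∀ x ∈ D, ∀ y ∈ D, slo ≤ s x y ∧ s x y ≤ shi)
    (hφ_bd : ∀ x ∈ D, ∀ y ∈ D, φlo ≤ φ x y ∧ φ x y ≤ φhi)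
    :
    ∃ Cp : ℝ, 0 < Cp ∧
      ∀ u ∈ tildeH s φ δ Ω (interactionDomain Ω δ),
        eLpNorm u 2 (volume.restrict D) ≤
          ENNReal.ofReal Cp * (energySq s φ δ D u) ^ (1/2 : ℝ) :=
  poincare_inequality_general n hn Ω hΩo hΩb δ hδ s φ slo shi φlo φhi hslo hφlo D hD hs_bd hφ_bd

end
end

section
/- Define β(r) := sup{|s(x,y)−s(y,x)| : x,y ∈ D, |x−y| ≤ r}. Assume (i) ∫₀¹ (β(r)|log r|)² r^{−1−2s̄} dr < ∞, and (ii) there exist L ≥ 0 and ε > 0 such that |φ(x,y)−φ(y,x)| ≤ L|x−y|^{s̄+ε} for all x,y ∈ D. Then there exists a finite constant A_γ such that sup_{x∈D} ∫_{{y∈D : γ_s(x,y)≠0}} γ_a(x,y)² / γ_s(x,y) dy ≤ A_γ < ∞. -/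
open MeasureTheory ENNReal Set

noncomputable section

/-!
For `r = |x - y| > 0` write `γ(x,y) = p r^(-a)` and `γ(y,x) = q r^(-b)` with `p, q ∈ [φ̲, φ̄]`.
For `r < 1` split `pA - qB = (p - q) A + q (A - B)`: the Hölder bound on `p - q` yields a term
`r^(2ε - n)`, and `|r^(-a) - r^(-b)| ≤ |a - b| |log r| max(r^(-a), r^(-b))` with `|a - b| ≤ 2β(r)`
yields `β(r)² log² r · r^(-n-2s̄)`. For `r ≥ 1`, `γ_a²/γ_s ≤ γ_s ≤ φ̄ r^(-n-2s̲)`. So `γ_a²/γ_s`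
is dominated by a radial function of `x - y`, which in polar coordinates is integrable over `ℝⁿ`
by (i), `ε > 0` and `s̲ > 0`; translation invariance makes the bound uniform in `x`.
-/

namespace Real

lemma abs_exp_sub_exp_le (u v : ℝ) : |exp u - exp v| ≤ |u - v| * exp (max u v) := by
  wlog h : v ≤ u generalizing u v
  · simpa only [abs_sub_comm, max_comm] using this v u (le_of_not_ge h)
  rw [abs_of_nonneg (sub_nonneg.2 (exp_le_exp.2 h)), abs_of_nonneg (sub_nonneg.2 h),
    max_eq_left h]
  have htangent : 1 - (u - v) ≤ exp (v - u) := by linarith [add_one_le_exp (v - u)]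
  have hsplit : exp v = exp u * exp (v - u) := by rw [← exp_add]; ring_nf
  nlinarith [exp_pos u]

lemma abs_rpow_neg_sub_rpow_neg_le {r : ℝ} (hr : 0 < r) (a b : ℝ) :
    |r ^ (-a) - r ^ (-b)| ≤ |a - b| * |log r| * max (r ^ (-a)) (r ^ (-b)) := by
  simp only [rpow_def_of_pos hr]
  calc |exp (log r * -a) - exp (log r * -b)|
      ≤ |log r * -a - log r * -b| * exp (max (log r * -a) (log r * -b)) :=
        abs_exp_sub_exp_le _ _
    _ = |a - b| * |log r| * max (exp (log r * -a)) (exp (log r * -b)) := by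
        rw [exp_monotone.map_max, abs_sub_comm a b, ← abs_mul]
        congr 2
        ring

end Real

lemma sq_half_sub_div_half_add_le_half_add {u v : ℝ} (hu : 0 ≤ u) (hv : 0 ≤ v) :
    ((u - v) / 2) ^ 2 / ((u + v) / 2) ≤ (u + v) / 2 := by
  rcases (add_nonneg hu hv).eq_or_lt with h | h
  · simp [← h]
  rw [div_le_iff₀ (by positivity)]
  nlinarith [mul_nonneg hu hv]

lemma sq_half_sub_div_half_add_le {p q A B c m M : ℝ} (hm : 0 < m) (hA : 0 < A) (hB : 0 < B)
    (hp : m ≤ p) (hq : m ≤ q) (hqM : q ≤ M) (hAB : |A - B| ≤ c * max A B) :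
    ((p * A - q * B) / 2) ^ 2 / ((p * A + q * B) / 2) ≤
      ((p - q) ^ 2 * A + M ^ 2 * c ^ 2 * max A B) / m := by
  set K := max A B
  have hK : 0 < K := lt_max_of_lt_left hA
  have hden : m * K ≤ p * A + q * B := by
    have hKAB : K ≤ A + B := max_le (by linarith) (by linarith)
    nlinarith [mul_le_mul_of_nonneg_left hKAB hm.le]
  have hnum : (p * A - q * B) ^ 2 ≤ 2 * ((p - q) ^ 2 * A * K + M ^ 2 * c ^ 2 * K ^ 2) := by
    have hq2 : q ^ 2 ≤ M ^ 2 := by nlinarith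
    have hAB2 : (A - B) ^ 2 ≤ c ^ 2 * K ^ 2 := by
      rw [← mul_pow]; exact sq_le_sq' (abs_le.1 hAB).1 (abs_le.1 hAB).2
    have hAK : A ≤ K := le_max_left A B
    nlinarith [sq_nonneg ((p - q) * A - q * (A - B)), mul_le_mul hq2 hAB2 (sq_nonneg _)
      (sq_nonneg M), mul_le_mul_of_nonneg_left hAK (mul_nonneg (sq_nonneg (p - q)) hA.le)]
  have hX : 0 ≤ (p - q) ^ 2 * A + M ^ 2 * c ^ 2 * K := by positivity
  rw [div_le_div_iff₀ (by nlinarith) hm]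
  nlinarith [mul_le_mul_of_nonneg_left hden hX, mul_le_mul_of_nonneg_right hnum hm.le]

section PowerWeights

open Real

variable {r a b p q N L ε β m M lo hi : ℝ}

lemma weighted_rpow_asym_le_of_lt_one (hr₀ : 0 < r) (hr₁ : r < 1) (hm : 0 < m) (hp : m ≤ p)
    (hq : m ≤ q) (hqM : q ≤ M) (ha : a ≤ N + 2 * hi) (hb : b ≤ N + 2 * hi)
    (hab : |a - b| ≤ 2 * β) (hpq : |p - q| ≤ L * r ^ (hi + ε)) :
    ((p * r ^ (-a) - q * r ^ (-b)) / 2) ^ 2 / ((p * r ^ (-a) + q * r ^ (-b)) / 2) ≤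
      (L ^ 2 * r ^ (2 * ε - N) + 4 * M ^ 2 * (β * |log r|) ^ 2 * r ^ (-N - 2 * hi)) / m := by
  have hA : 0 < r ^ (-a) := rpow_pos_of_pos hr₀ _
  have hB : 0 < r ^ (-b) := rpow_pos_of_pos hr₀ _
  have hAR : r ^ (-a) ≤ r ^ (-N - 2 * hi) := rpow_le_rpow_of_exponent_ge hr₀ hr₁.le (by linarith)
  have hBR : r ^ (-b) ≤ r ^ (-N - 2 * hi) := rpow_le_rpow_of_exponent_ge hr₀ hr₁.le (by linarith)
  have hAB : |r ^ (-a) - r ^ (-b)| ≤ 2 * β * |log r| * max (r ^ (-a)) (r ^ (-b)) := by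
    refine (abs_rpow_neg_sub_rpow_neg_le hr₀ a b).trans ?_
    gcongr
  refine (sq_half_sub_div_half_add_le hm hA hB hp hq hqM hAB).trans ?_
  gcongr ?_ / m
  have hpq2 : (p - q) ^ 2 ≤ (L * r ^ (hi + ε)) ^ 2 :=
    sq_le_sq' (abs_le.1 hpq).1 (abs_le.1 hpq).2
  have hpow : (r ^ (hi + ε)) ^ 2 * r ^ (-N - 2 * hi) = r ^ (2 * ε - N) := by
    rw [← Real.rpow_natCast, ← rpow_mul hr₀.le, ← rpow_add hr₀]
    ring_nf
  calc (p - q) ^ 2 * r ^ (-a) + M ^ 2 * (2 * β * |log r|) ^ 2 * max (r ^ (-a)) (r ^ (-b))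
      ≤ (L * r ^ (hi + ε)) ^ 2 * r ^ (-N - 2 * hi) +
          M ^ 2 * (2 * β * |log r|) ^ 2 * r ^ (-N - 2 * hi) := by
        gcongr
        exact max_le hAR hBR
    _ = L ^ 2 * r ^ (2 * ε - N) + 4 * M ^ 2 * (β * |log r|) ^ 2 * r ^ (-N - 2 * hi) := by
        rw [← hpow]; ring

lemma weighted_rpow_asym_le_of_one_le (hr : 1 ≤ r) (hp₀ : 0 ≤ p) (hq₀ : 0 ≤ q) (hp : p ≤ M)
    (hq : q ≤ M) (ha : N + 2 * lo ≤ a) (hb : N + 2 * lo ≤ b) :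
    ((p * r ^ (-a) - q * r ^ (-b)) / 2) ^ 2 / ((p * r ^ (-a) + q * r ^ (-b)) / 2) ≤
      M * r ^ (-N - 2 * lo) := by
  have hr₀ : 0 < r := zero_lt_one.trans_le hr
  have hA : r ^ (-a) ≤ r ^ (-N - 2 * lo) := rpow_le_rpow_of_exponent_le hr (by linarith)
  have hB : r ^ (-b) ≤ r ^ (-N - 2 * lo) := rpow_le_rpow_of_exponent_le hr (by linarith)
  refine (sq_half_sub_div_half_add_le_half_add (by positivity) (by positivity)).trans ?_
  have hpA := mul_le_mul hp hA (rpow_pos_of_pos hr₀ _).le (hp₀.trans hp)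
  have hqB := mul_le_mul hq hB (rpow_pos_of_pos hr₀ _).le (hp₀.trans hp)
  linarith

end PowerWeights

section Majorant

open Real

/-- Radial majorant of `γ_a(x,y)² / γ_s(x,y)` as a function of `r = |x - y|`, with `β` the
asymmetry modulus of `s` and `L, ε` the Hölder data of the asymmetry of `φ`. -/
def asymMajorant (n : ℕ) (β : ℝ → ℝ) (L ε φlo φhi slo shi r : ℝ) : ℝ :=
  if r < 1 then
    (L ^ 2 * r ^ (2 * ε - n) + 4 * φhi ^ 2 * (β r * |log r|) ^ 2 * r ^ (-n - 2 * shi)) / φlo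
  else φhi * r ^ (-n - 2 * slo)

variable {n : ℕ} {β : ℝ → ℝ} {L ε φlo φhi slo shi r : ℝ}

lemma asymMajorant_nonneg (hφlo : 0 ≤ φlo) (hφhi : 0 ≤ φhi) (hr : 0 ≤ r) :
    0 ≤ asymMajorant n β L ε φlo φhi slo shi r := by
  unfold asymMajorant
  split_ifs <;> positivity

lemma measurable_asymMajorant (hβ : Measurable β) :
    Measurable (asymMajorant n β L ε φlo φhi slo shi) := by
  have := Real.measurable_log
  exact Measurable.ite measurableSet_Iio (by fun_prop) (by fun_prop)

lemma integrable_asymMajorant_norm {E : Type*} [NormedAddCommGroup E] [NormedSpace ℝ E]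
    [FiniteDimensional ℝ E] [MeasurableSpace E] [BorelSpace E] [Nontrivial E]
    (μ : Measure E) [μ.IsAddHaarMeasure] (hdim : Module.finrank ℝ E = n) (hβ : Measurable β)
    (hε : 0 < ε) (hslo : 0 < slo)
    (hβint : ∫⁻ r in Ioo (0 : ℝ) 1,
      ENNReal.ofReal ((β r * |log r|) ^ 2 * r ^ (-1 - 2 * shi)) < ⊤) :
    Integrable (fun z : E => asymMajorant n β L ε φlo φhi slo shi ‖z‖) μ := by
  have hn : 1 ≤ n := hdim ▸ Module.finrank_pos
  have hpow : ∀ r : ℝ, r ^ (n - 1) = r ^ ((n : ℝ) - 1) := fun r => by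
    rw [← Real.rpow_natCast, Nat.cast_sub hn, Nat.cast_one]
  rw [integrable_fun_norm_addHaar μ, hdim, ← Ioo_union_Ici_eq_Ioi zero_lt_one]
  refine IntegrableOn.union ?_ ?_
  · have hβ' : IntegrableOn (fun r => (β r * |log r|) ^ 2 * r ^ (-1 - 2 * shi)) (Ioo 0 1) := by
      refine ⟨by have := Real.measurable_log; fun_prop, (hasFiniteIntegral_iff_ofReal ?_).2 hβint⟩
      exact ae_restrict_of_forall_mem measurableSet_Ioo fun r hr => by
        have := hr.1; positivity
    have hε' := (intervalIntegral.integrableOn_Ioo_rpow_iff zero_lt_one).2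
      (by linarith : -1 < 2 * ε - 1)
    refine IntegrableOn.congr_fun (((hε'.const_mul (L ^ 2)).add
      (hβ'.const_mul (4 * φhi ^ 2))).div_const φlo) (fun r hr => ?_) measurableSet_Ioo
    have hr₀ : 0 < r := hr.1
    have e₁ : r ^ ((n : ℝ) - 1) * r ^ (2 * ε - n) = r ^ (2 * ε - 1) := by
      rw [← rpow_add hr₀]; ring_nf
    have e₂ : r ^ ((n : ℝ) - 1) * r ^ (-n - 2 * shi) = r ^ (-1 - 2 * shi) := by
      rw [← rpow_add hr₀]; ring_nf
    simp only [asymMajorant, if_pos hr.2, smul_eq_mul, hpow, Pi.add_apply]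
    rw [← e₁, ← e₂]
    ring
  · rw [integrableOn_Ici_iff_integrableOn_Ioi]
    refine IntegrableOn.congr_fun ((integrableOn_Ioi_rpow_of_lt (by linarith : -1 - 2 * slo < -1)
      zero_lt_one).const_mul φhi) (fun r hr => ?_) measurableSet_Ioi
    have hr₁ : 1 < r := hr
    have e : r ^ ((n : ℝ) - 1) * r ^ (-n - 2 * slo) = r ^ (-1 - 2 * slo) := by
      rw [← rpow_add (zero_lt_one.trans hr₁)]; ring_nf
    simp only [asymMajorant, if_neg hr₁.le.not_gt, smul_eq_mul, hpow]
    rw [← e]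
    ring

end Majorant

section Asymmetry

variable {n : ℕ} {s : Pt n → Pt n → ℝ} {D : Set (Pt n)} {C : ℝ}

lemma bddAbove_asymmetries (hC : ∀ x ∈ D, ∀ y ∈ D, |s x y - s y x| ≤ C) (r : ℝ) :
    BddAbove {t | ∃ x ∈ D, ∃ y ∈ D, dist x y ≤ r ∧ t = |s x y - s y x|} :=
  ⟨C, by rintro t ⟨x, hx, y, hy, -, rfl⟩; exact hC x hx y hy⟩

lemma abs_sub_le_betaFn (hC : ∀ x ∈ D, ∀ y ∈ D, |s x y - s y x| ≤ C) {x y : Pt n}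
    (hx : x ∈ D) (hy : y ∈ D) : |s x y - s y x| ≤ betaFn s D (dist x y) :=
  le_csSup (bddAbove_asymmetries hC _) ⟨x, hx, y, hy, le_rfl, rfl⟩

lemma betaFn_monotone (hC : ∀ x ∈ D, ∀ y ∈ D, |s x y - s y x| ≤ C) : Monotone (betaFn s D) := by
  intro r₁ r₂ hr
  rcases eq_empty_or_nonempty {t | ∃ x ∈ D, ∃ y ∈ D, dist x y ≤ r₁ ∧ t = |s x y - s y x|}
    with hempty | hne
  · rw [betaFn, hempty, Real.sSup_empty]
    exact Real.sSup_nonneg (by rintro t ⟨x, -, y, -, -, rfl⟩; exact abs_nonneg _)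
  · refine csSup_le_csSup (bddAbove_asymmetries hC r₂) hne ?_
    rintro t ⟨x, hx, y, hy, hxy, rfl⟩
    exact ⟨x, hx, y, hy, hxy.trans hr, rfl⟩

end Asymmetry

lemma kerAnti_sq_div_kerSym_le {n : ℕ} {s φ : Pt n → Pt n → ℝ} {δ : ℝ≥0∞} {x y : Pt n}
    {β : ℝ → ℝ} {L ε φlo φhi slo shi : ℝ} (hφlo : 0 < φlo)
    (hs : slo ≤ s x y ∧ s x y ≤ shi) (hs' : slo ≤ s y x ∧ s y x ≤ shi)
    (hφ : φlo ≤ φ x y ∧ φ x y ≤ φhi) (hφ' : φlo ≤ φ y x ∧ φ y x ≤ φhi)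
    (hβ : |s x y - s y x| ≤ β (dist x y)) (hL : |φ x y - φ y x| ≤ L * dist x y ^ (shi + ε)) :
    kerAnti s φ δ x y ^ 2 / kerSym s φ δ x y ≤
      asymMajorant n β L ε φlo φhi slo shi (dist x y) := by
  have hzero : kerAnti s φ δ x y = 0 → kerAnti s φ δ x y ^ 2 / kerSym s φ δ x y ≤
      asymMajorant n β L ε φlo φhi slo shi (dist x y) := fun h => by
    rw [h, zero_pow two_ne_zero, zero_div]
    exact asymMajorant_nonneg hφlo.le (hφlo.le.trans (hφ.1.trans hφ.2)) dist_nonneg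
  by_cases hδ : ENNReal.ofReal (dist x y) ≤ δ
  swap
  · exact hzero (by simp [kerAnti, ker, dist_comm y x, hδ])
  rcases eq_or_ne x y with rfl | hxy
  · exact hzero (by simp [kerAnti])
  have hr : 0 < dist x y := dist_pos.2 hxy
  have hab : |((n : ℝ) + 2 * s x y) - (n + 2 * s y x)| ≤ 2 * β (dist x y) := by
    rw [add_sub_add_left_eq_sub, ← mul_sub, abs_mul, abs_two]
    gcongr
  simp only [kerAnti, kerSym, ker, dist_comm y x, if_pos hδ, asymMajorant]
  split_ifs with hr₁
  · exact weighted_rpow_asym_le_of_lt_one hr hr₁ hφlo hφ.1 hφ'.1 hφ'.2 (by linarith)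
      (by linarith) hab hL
  · exact weighted_rpow_asym_le_of_one_le (not_lt.1 hr₁) (hφlo.le.trans hφ.1)
      (hφlo.le.trans hφ'.1) hφ.2 hφ'.2 (by linarith) (by linarith)

theorem kernel_asymmetry_bound_general
    (n : ℕ) (hn : 1 ≤ n)
    (δ : ℝ≥0∞)
    (s φ : Pt n → Pt n → ℝ)
    (slo shi φlo φhi : ℝ) (hslo : 0 < slo) (hφlo : 0 < φlo)
    (D : Set (Pt n))
    (hs_bd : ∀ x ∈ D, ∀ y ∈ D, slo ≤ s x y ∧ s x y ≤ shi)
    (hφ_bd : ∀ x ∈ D, ∀ y ∈ D, φlo ≤ φ x y ∧ φ x y ≤ φhi)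
    (hbeta : ∫⁻ r in Set.Ioo (0:ℝ) 1,
        ENNReal.ofReal ((betaFn s D r * |Real.log r|) ^ 2 * r ^ (-1 - 2 * shi)) < ⊤)
    (hphiHolder : ∃ L : ℝ, 0 ≤ L ∧ ∃ ε : ℝ, 0 < ε ∧
        ∀ x ∈ D, ∀ y ∈ D, |φ x y - φ y x| ≤ L * dist x y ^ (shi + ε)) :
    ∃ Aγ : ℝ, ∀ x ∈ D,
      (∫⁻ y in {y ∈ D | kerSym s φ δ x y ≠ 0},
          ENNReal.ofReal ((kerAnti s φ δ x y) ^ 2 / kerSym s φ δ x y)) ≤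
        ENNReal.ofReal Aγ := by
  obtain ⟨L, -, ε, hε, hL⟩ := hphiHolder
  have hasym : ∀ x ∈ D, ∀ y ∈ D, |s x y - s y x| ≤ shi - slo := fun x hx y hy => by
    have := hs_bd x hx y hy; have := hs_bd y hy x hx
    exact abs_sub_le_iff.2 ⟨by linarith, by linarith⟩
  have hβ := (betaFn_monotone hasym).measurable
  set g := asymMajorant n (betaFn s D) L ε φlo φhi slo shi
  have hg_meas : Measurable g := measurable_asymMajorant hβ
  have : Nontrivial (Pt n) := by
    have : Nonempty (Fin n) := Fin.pos_iff_nonempty.1 hn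
    infer_instance
  have hg := integrable_asymMajorant_norm (L := L) (φlo := φlo) (φhi := φhi)
    (volume : Measure (Pt n)) finrank_euclideanSpace_fin hβ hε hslo hbeta
  refine ⟨(∫⁻ z : Pt n, ENNReal.ofReal (g ‖z‖)).toReal, fun x hx => ?_⟩
  rw [ENNReal.ofReal_toReal hg.lintegral_lt_top.ne]
  calc ∫⁻ y in {y ∈ D | kerSym s φ δ x y ≠ 0},
        ENNReal.ofReal ((kerAnti s φ δ x y) ^ 2 / kerSym s φ δ x y)
      ≤ ∫⁻ y in {y ∈ D | kerSym s φ δ x y ≠ 0}, ENNReal.ofReal (g (dist x y)) := by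
        refine setLIntegral_mono (by fun_prop) fun y hy => ENNReal.ofReal_le_ofReal ?_
        exact kerAnti_sq_div_kerSym_le hφlo (hs_bd x hx y hy.1) (hs_bd y hy.1 x hx)
          (hφ_bd x hx y hy.1) (hφ_bd y hy.1 x hx) (abs_sub_le_betaFn hasym hx hy.1)
          (hL x hx y hy.1)
    _ ≤ ∫⁻ y, ENNReal.ofReal (g (dist x y)) := setLIntegral_le_lintegral _ _
    _ = ∫⁻ z, ENNReal.ofReal (g ‖z‖) := by
        simp_rw [dist_comm x, dist_eq_norm]
        exact lintegral_sub_right_eq_self (fun z => ENNReal.ofReal (g ‖z‖)) x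

/-- **Proposition (bound on the kernel asymmetry).** Under the integrability condition on
`β(r)|log r|` and Hölder-type control of the asymmetry of `φ`, the quantity
`sup_{x∈D} ∫_{γ_s(x,·)≠0} γ_a(x,y)²/γ_s(x,y) dy` is bounded by a finite constant `A_γ`. -/
theorem kernel_asymmetry_bound
    (n : ℕ) (hn : 1 ≤ n)
    (Ω : Set (Pt n)) (hΩo : IsOpen Ω) (hΩb : Bornology.IsBounded Ω) (hΩne : Ω.Nonempty)
    (δ : ℝ≥0∞) (hδ : 0 < δ)
    (s φ : Pt n → Pt n → ℝ)
    (hs_meas : Measurable (Function.uncurry s)) (hφ_meas : Measurable (Function.uncurry φ))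
    (slo shi φlo φhi : ℝ) (hslo : 0 < slo) (hshi : shi < 1) (hφlo : 0 < φlo)
    (D : Set (Pt n)) (hD : D = Ω ∪ interactionDomain Ω δ)
    (hs_bd : ∀ x ∈ D, ∀ y ∈ D, slo ≤ s x y ∧ s x y ≤ shi)
    (hφ_bd : ∀ x ∈ D, ∀ y ∈ D, φlo ≤ φ x y ∧ φ x y ≤ φhi)
    (hbeta : ∫⁻ r in Set.Ioo (0:ℝ) 1,
        ENNReal.ofReal ((betaFn s D r * |Real.log r|) ^ 2 * r ^ (-1 - 2 * shi)) < ⊤)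
    (hphiHolder : ∃ L : ℝ, 0 ≤ L ∧ ∃ ε : ℝ, 0 < ε ∧
        ∀ x ∈ D, ∀ y ∈ D, |φ x y - φ y x| ≤ L * dist x y ^ (shi + ε)) :
    ∃ Aγ : ℝ, ∀ x ∈ D,
      (∫⁻ y in {y ∈ D | kerSym s φ δ x y ≠ 0},
          ENNReal.ofReal ((kerAnti s φ δ x y) ^ 2 / kerSym s φ δ x y)) ≤
        ENNReal.ofReal Aγ :=
  kernel_asymmetry_bound_general n hn δ s φ slo shi φlo φhi hslo hφlo D hs_bd hφ_bd hbeta hphiHolder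
end
end

section
/- (Near-field estimate for the coefficient asymmetry.) Define γ_{a,1}(x,y) := (1/2)(φ(x,y)−φ(y,x)) |x−y|^{−n−2s(x,y)} for |x−y| ≤ δ and 0 otherwise. If there exist L ≥ 0 and ε > 0 such that |φ(x,y)−φ(y,x)| ≤ L|x−y|^{s̄+ε} for all x,y ∈ D, then sup_{x∈D} ∫_{{y ∈ D : |x−y| ≤ δ̲, γ_s(x,y) ≠ 0}} γ_{a,1}(x,y)² / γ_s(x,y) dy < ∞. -/
/-! Where `|x-y| ≤ δ`, the term `γ(x,y)` alone bounds `2 γ_s(x,y)` from below, so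
`γ_{a,1}² / γ_s ≲ |φ(x,y) - φ(y,x)|² |x-y|^{-n-2s(x,y)} ≲ L² |x-y|^{2ε-n}` for `|x-y| ≤ 1`, using
`s(x,y) ≤ s̄`. The Riesz potential `|z|^{2ε-n}` is integrable on the unit ball, and by translation
invariance its integral over `B(x,1)` does not depend on `x`. -/

open MeasureTheory ENNReal Set

noncomputable section

/-- `γ_{a,1}(x,y) = (1/2)(φ(x,y)-φ(y,x)) |x-y|^{-n-2s(x,y)}` for `|x-y| ≤ δ`, else `0`. -/
def kerA1 {n : ℕ} (s φ : Pt n → Pt n → ℝ) (δ : ℝ≥0∞) (x y : Pt n) : ℝ :=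
  if ENNReal.ofReal (dist x y) ≤ δ then
    (φ x y - φ y x) / 2 * dist x y ^ (-((n : ℝ) + 2 * s x y)) else 0

open Metric

lemma lintegral_closedBall_dist_eq {G : Type*} [SeminormedAddCommGroup G] [MeasurableSpace G]
    [OpensMeasurableSpace G] [MeasurableAdd G] (μ : Measure G) [μ.IsAddLeftInvariant]
    (f : ℝ → ℝ≥0∞) (x : G) (r : ℝ) :
    ∫⁻ y in closedBall x r, f (dist x y) ∂μ = ∫⁻ z in closedBall 0 r, f ‖z‖ ∂μ := by
  rw [← lintegral_indicator measurableSet_closedBall, ← lintegral_indicator measurableSet_closedBall,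
    ← lintegral_add_left_eq_self _ x]
  congr 1 with z
  simp [indicator, dist_eq_norm']

lemma lintegral_closedBall_norm_rpow_lt_top {E : Type*} [NormedAddCommGroup E] [NormedSpace ℝ E]
    [FiniteDimensional ℝ E] [MeasurableSpace E] [BorelSpace E] (μ : Measure E)
    [μ.IsAddHaarMeasure] (hd : 1 ≤ Module.finrank ℝ E) {a : ℝ}
    (ha : -(Module.finrank ℝ E : ℝ) < a) (r : ℝ) :
    ∫⁻ z in closedBall 0 r, ENNReal.ofReal (‖z‖ ^ a) ∂μ < ⊤ := by
  have hloc : LocallyIntegrable (fun z : E => ‖z‖ ^ a) μ :=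
    locallyIntegrable_of_norm_le_rpow (C := 1) (α := -a) hd (by linarith)
      (.of_forall fun z => by rw [one_mul, neg_neg, Real.norm_of_nonneg (by positivity)])
      (measurable_norm.pow_const a).aestronglyMeasurable
  exact (hloc.integrableOn_isCompact (isCompact_closedBall 0 r)).setLIntegral_lt_top

lemma sq_mul_rpow_le_of_abs_le_rpow {d Δ L σ ε t m : ℝ} (hd0 : 0 < d) (hd1 : d ≤ 1) (ht : t ≤ σ)
    (hΔ : |Δ| ≤ L * d ^ (σ + ε)) :
    Δ ^ 2 * d ^ (-(m + 2 * t)) ≤ L ^ 2 * d ^ (2 * ε - m) := by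
  have hsq : Δ ^ 2 ≤ L ^ 2 * d ^ (2 * (σ + ε)) := by
    rw [← sq_abs, mul_comm 2, Real.rpow_mul hd0.le, Real.rpow_two, ← mul_pow]
    exact pow_le_pow_left₀ (abs_nonneg Δ) hΔ 2
  calc Δ ^ 2 * d ^ (-(m + 2 * t))
      ≤ L ^ 2 * d ^ (2 * (σ + ε)) * d ^ (-(m + 2 * t)) := by gcongr
    _ = L ^ 2 * d ^ (2 * (σ + ε) + -(m + 2 * t)) := by rw [mul_assoc, Real.rpow_add hd0]
    _ ≤ L ^ 2 * d ^ (2 * ε - m) :=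
        mul_le_mul_of_nonneg_left (Real.rpow_le_rpow_of_exponent_ge hd0 hd1 (by linarith))
          (sq_nonneg L)

section Kernel

variable {n : ℕ} {s φ : Pt n → Pt n → ℝ} {δ : ℝ≥0∞} {x y : Pt n} {c : ℝ}

lemma kerA1_sq_div_kerSym_le (hc : 0 < c) (hxy : c ≤ φ x y) (hyx : 0 ≤ φ y x) :
    kerA1 s φ δ x y ^ 2 / kerSym s φ δ x y ≤
      (φ x y - φ y x) ^ 2 / (2 * c) * dist x y ^ (-((n : ℝ) + 2 * s x y)) := by
  set P := dist x y ^ (-((n : ℝ) + 2 * s x y))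
  have hP : 0 ≤ P := by positivity
  by_cases hδ : ENNReal.ofReal (dist x y) ≤ δ
  swap
  · rw [show kerA1 s φ δ x y = 0 from if_neg hδ, sq, zero_mul, zero_div]
    positivity
  have hA : kerA1 s φ δ x y = (φ x y - φ y x) / 2 * P := if_pos hδ
  have hS : c * P / 2 ≤ kerSym s φ δ x y := by
    have hyx' : 0 ≤ φ y x * dist y x ^ (-((n : ℝ) + 2 * s y x)) := by positivity
    have hxy' : c * P ≤ φ x y * P := mul_le_mul_of_nonneg_right hxy hP
    simp only [kerSym, ker, dist_comm y x, if_pos hδ] at hyx' ⊢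
    linarith
  rcases hP.eq_or_lt with hP0 | hPpos
  · simp [hA, ← hP0]
  calc kerA1 s φ δ x y ^ 2 / kerSym s φ δ x y
      ≤ ((φ x y - φ y x) / 2 * P) ^ 2 / (c * P / 2) := by
        rw [hA]
        exact div_le_div_of_nonneg_left (sq_nonneg _) (by positivity) hS
    _ = (φ x y - φ y x) ^ 2 / (2 * c) * P := by
        field_simp

lemma kerA1_sq_div_kerSym_le_rpow {L σ ε : ℝ} (hc : 0 < c) (hxy : c ≤ φ x y) (hyx : 0 ≤ φ y x)
    (hs : s x y ≤ σ) (hφ : |φ x y - φ y x| ≤ L * dist x y ^ (σ + ε)) (hd : dist x y ≤ 1) :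
    kerA1 s φ δ x y ^ 2 / kerSym s φ δ x y ≤ L ^ 2 / (2 * c) * dist x y ^ (2 * ε - n) := by
  rcases (dist_nonneg (x := x) (y := y)).eq_or_lt with hd0 | hd0
  · obtain rfl := dist_eq_zero.1 hd0.symm
    have hA : kerA1 s φ δ x x = 0 := by simp [kerA1]
    rw [hA, sq, zero_mul, zero_div]
    positivity
  calc kerA1 s φ δ x y ^ 2 / kerSym s φ δ x y
      ≤ (φ x y - φ y x) ^ 2 / (2 * c) * dist x y ^ (-((n : ℝ) + 2 * s x y)) :=
        kerA1_sq_div_kerSym_le hc hxy hyx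
    _ = (φ x y - φ y x) ^ 2 * dist x y ^ (-((n : ℝ) + 2 * s x y)) / (2 * c) := by ring
    _ ≤ L ^ 2 * dist x y ^ (2 * ε - n) / (2 * c) :=
        div_le_div_of_nonneg_right (sq_mul_rpow_le_of_abs_le_rpow hd0 hd hs hφ) (by positivity)
    _ = L ^ 2 / (2 * c) * dist x y ^ (2 * ε - n) := by ring

end Kernel

theorem kerA1_nearfield_bound_general
    (n : ℕ) (hn : 1 ≤ n)
    (δ : ℝ≥0∞)
    (s φ : Pt n → Pt n → ℝ)
    (slo shi φlo φhi : ℝ) (hφlo : 0 < φlo)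
    (D : Set (Pt n))
    (hs_bd : ∀ x ∈ D, ∀ y ∈ D, slo ≤ s x y ∧ s x y ≤ shi)
    (hφ_bd : ∀ x ∈ D, ∀ y ∈ D, φlo ≤ φ x y ∧ φ x y ≤ φhi)
    (hphiHolder : ∃ L : ℝ, 0 ≤ L ∧ ∃ ε : ℝ, 0 < ε ∧
        ∀ x ∈ D, ∀ y ∈ D, |φ x y - φ y x| ≤ L * dist x y ^ (shi + ε)) :
    (⨆ x ∈ D,
      ∫⁻ y in {y ∈ D |
          ENNReal.ofReal (dist x y) ≤ min δ 1 ∧ kerSym s φ δ x y ≠ 0},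
        ENNReal.ofReal ((kerA1 s φ δ x y) ^ 2 / kerSym s φ δ x y)) < ⊤ := by
  obtain ⟨L, -, ε, hε, hHolder⟩ := hphiHolder
  have hdim : Module.finrank ℝ (Pt n) = n := finrank_euclideanSpace_fin
  have hRiesz := lintegral_closedBall_norm_rpow_lt_top (volume : Measure (Pt n)) (hdim.symm ▸ hn)
    (a := 2 * ε - n) (by rw [hdim]; linarith) 1
  set C := L ^ 2 / (2 * φlo)
  refine lt_of_le_of_lt (b := ENNReal.ofReal C * _) (iSup₂_le fun x hx => ?_)
    (mul_lt_top ofReal_lt_top hRiesz)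
  set S := {y ∈ D | ENNReal.ofReal (dist x y) ≤ min δ 1 ∧ kerSym s φ δ x y ≠ 0}
  have hball : S ⊆ closedBall x 1 := fun y hy => by
    rw [mem_closedBall, dist_comm]
    exact ENNReal.ofReal_le_one.1 (hy.2.1.trans (min_le_right _ _))
  calc _ ≤ ∫⁻ y in S, ENNReal.ofReal C * ENNReal.ofReal (dist x y ^ (2 * ε - n)) := by
        refine setLIntegral_mono (by fun_prop) fun y hy => ?_
        rw [← ofReal_mul (by positivity)]
        refine ofReal_le_ofReal (kerA1_sq_div_kerSym_le_rpow hφlo (hφ_bd x hx y hy.1).1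
          (hφlo.le.trans (hφ_bd y hy.1 x hx).1) (hs_bd x hx y hy.1).2 (hHolder x hx y hy.1) ?_)
        simpa [dist_comm] using hball hy
    _ ≤ ∫⁻ y in closedBall x 1, ENNReal.ofReal C * ENNReal.ofReal (dist x y ^ (2 * ε - n)) :=
        lintegral_mono_set hball
    _ = _ := by
        rw [lintegral_const_mul' _ _ ofReal_ne_top,
          lintegral_closedBall_dist_eq volume (fun d => ENNReal.ofReal (d ^ (2 * ε - n)))]

/-- **Near-field estimate for the coefficient asymmetry**: if `|φ(x,y)-φ(y,x)| ≤ L|x-y|^{s̄+ε}`,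
then `sup_{x∈D} ∫_{y∈D, |x-y|≤δ̲, γ_s(x,y)≠0} γ_{a,1}(x,y)²/γ_s(x,y) dy < ∞`. -/
theorem kerA1_nearfield_bound
    (n : ℕ) (hn : 1 ≤ n)
    (Ω : Set (Pt n)) (hΩo : IsOpen Ω) (hΩb : Bornology.IsBounded Ω) (hΩne : Ω.Nonempty)
    (δ : ℝ≥0∞) (hδ : 0 < δ)
    (s φ : Pt n → Pt n → ℝ)
    (hs_meas : Measurable (Function.uncurry s)) (hφ_meas : Measurable (Function.uncurry φ))
    (slo shi φlo φhi : ℝ) (hslo : 0 < slo) (hshi : shi < 1) (hφlo : 0 < φlo)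
    (D : Set (Pt n)) (hD : D = Ω ∪ interactionDomain Ω δ)
    (hs_bd : ∀ x ∈ D, ∀ y ∈ D, slo ≤ s x y ∧ s x y ≤ shi)
    (hφ_bd : ∀ x ∈ D, ∀ y ∈ D, φlo ≤ φ x y ∧ φ x y ≤ φhi)
    (hphiHolder : ∃ L : ℝ, 0 ≤ L ∧ ∃ ε : ℝ, 0 < ε ∧
        ∀ x ∈ D, ∀ y ∈ D, |φ x y - φ y x| ≤ L * dist x y ^ (shi + ε)) :
    (⨆ x ∈ D,
      ∫⁻ y in {y ∈ D |
          ENNReal.ofReal (dist x y) ≤ min δ 1 ∧ kerSym s φ δ x y ≠ 0},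
        ENNReal.ofReal ((kerA1 s φ δ x y) ^ 2 / kerSym s φ δ x y)) < ⊤ :=
  kerA1_nearfield_bound_general n hn δ s φ slo shi φlo φhi hφlo D hs_bd hφ_bd hphiHolder

end
end
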